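/- Let (R,V,W,S) be a Morita context with VW = R and WV = S. If R is a semiprime ring or S is a semiprime ring, then the Morita context ring T is a semiprime ring. -/

import Mathlib

/-- A Morita context `(R,V,W,S)`: rings `R`, `S`, an `(R,S)`-bimodule `V`,
an `(S,R)`-bimodule `W`, and context products `V × W → R`, `W × V → S`
making the `2 × 2` matrix set an associative ring. -/
structure MoritaContext (R S V W : Type*) [Ring R] [Ring S]
    [AddCommGroup V] [AddCommGroup W] : Type _ where
  smulRV : R → V → V
  smulVS : V → S → V
  smulSW : S → W → W
  smulWR : W → R → W
  mulVW : V → W → R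
  mulWV : W → V → S
  smulRV_add : ∀ r v v', smulRV r (v + v') = smulRV r v + smulRV r v'
  add_smulRV : ∀ r r' v, smulRV (r + r') v = smulRV r v + smulRV r' v
  mul_smulRV : ∀ r r' v, smulRV (r * r') v = smulRV r (smulRV r' v)
  one_smulRV : ∀ v, smulRV 1 v = v
  smulVS_add : ∀ v v' s, smulVS (v + v') s = smulVS v s + smulVS v' s
  add_smulVS : ∀ v s s', smulVS v (s + s') = smulVS v s + smulVS v s'
  mul_smulVS : ∀ v s s', smulVS v (s * s') = smulVS (smulVS v s) s'
  one_smulVS : ∀ v, smulVS v 1 = v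
  smul_assocRVS : ∀ r v s, smulVS (smulRV r v) s = smulRV r (smulVS v s)
  smulSW_add : ∀ s w w', smulSW s (w + w') = smulSW s w + smulSW s w'
  add_smulSW : ∀ s s' w, smulSW (s + s') w = smulSW s w + smulSW s' w
  mul_smulSW : ∀ s s' w, smulSW (s * s') w = smulSW s (smulSW s' w)
  one_smulSW : ∀ w, smulSW 1 w = w
  smulWR_add : ∀ w w' r, smulWR (w + w') r = smulWR w r + smulWR w' r
  add_smulWR : ∀ w r r', smulWR w (r + r') = smulWR w r + smulWR w r'
  mul_smulWR : ∀ w r r', smulWR w (r * r') = smulWR (smulWR w r) r'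
  one_smulWR : ∀ w, smulWR w 1 = w
  smul_assocSWR : ∀ s w r, smulWR (smulSW s w) r = smulSW s (smulWR w r)
  mulVW_add_left : ∀ v v' w, mulVW (v + v') w = mulVW v w + mulVW v' w
  mulVW_add_right : ∀ v w w', mulVW v (w + w') = mulVW v w + mulVW v w'
  mulWV_add_left : ∀ w w' v, mulWV (w + w') v = mulWV w v + mulWV w' v
  mulWV_add_right : ∀ w v v', mulWV w (v + v') = mulWV w v + mulWV w v'
  mulVW_smulR : ∀ r v w, mulVW (smulRV r v) w = r * mulVW v w
  mulVW_smulS : ∀ v s w, mulVW (smulVS v s) w = mulVW v (smulSW s w)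
  mulVW_smulWR : ∀ v w r, mulVW v (smulWR w r) = mulVW v w * r
  mulWV_smulS : ∀ s w v, mulWV (smulSW s w) v = s * mulWV w v
  mulWV_smulR : ∀ w r v, mulWV (smulWR w r) v = mulWV w (smulRV r v)
  mulWV_smulVS : ∀ w v s, mulWV w (smulVS v s) = mulWV w v * s
  assocVWV : ∀ v w v', smulRV (mulVW v w) v' = smulVS v (mulWV w v')
  assocWVW : ∀ w v w', smulSW (mulWV w v) w' = smulWR w (mulVW v w')

namespace MoritaContext

variable {R S V W : Type*} [Ring R] [Ring S] [AddCommGroup V] [AddCommGroup W]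
variable (M : MoritaContext R S V W)

/-- The underlying set of the Morita context ring: matrices `((r,v),(w,s))`. -/
def Mat (_ : MoritaContext R S V W) : Type _ := (R × V) × (W × S)

instance : AddCommGroup M.Mat := inferInstanceAs (AddCommGroup ((R × V) × (W × S)))


@[simp] lemma add_fst_fst (a b : M.Mat) : (a + b).1.1 = a.1.1 + b.1.1 := rfl
@[simp] lemma add_fst_snd (a b : M.Mat) : (a + b).1.2 = a.1.2 + b.1.2 := rfl
@[simp] lemma add_snd_fst (a b : M.Mat) : (a + b).2.1 = a.2.1 + b.2.1 := rfl
@[simp] lemma add_snd_snd (a b : M.Mat) : (a + b).2.2 = a.2.2 + b.2.2 := rfl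
@[simp] lemma neg_fst_fst (a : M.Mat) : (-a).1.1 = -a.1.1 := rfl
@[simp] lemma neg_fst_snd (a : M.Mat) : (-a).1.2 = -a.1.2 := rfl
@[simp] lemma neg_snd_fst (a : M.Mat) : (-a).2.1 = -a.2.1 := rfl
@[simp] lemma neg_snd_snd (a : M.Mat) : (-a).2.2 = -a.2.2 := rfl
@[simp] lemma zero_fst_fst : (0 : M.Mat).1.1 = 0 := rfl
@[simp] lemma zero_fst_snd : (0 : M.Mat).1.2 = 0 := rfl
@[simp] lemma zero_snd_fst : (0 : M.Mat).2.1 = 0 := rfl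
@[simp] lemma zero_snd_snd : (0 : M.Mat).2.2 = 0 := rfl

/-- The matrix `((r,v),(w,s))` as an element of the Morita context ring. -/
def mat (r : R) (v : V) (w : W) (s : S) : M.Mat := ((r, v), (w, s))

lemma smulRV_zero (r : R) : M.smulRV r 0 = 0 := by
  have h := M.smulRV_add r 0 0
  rw [add_zero] at h
  exact (add_eq_left.mp h.symm)

lemma zero_smulRV (v : V) : M.smulRV 0 v = 0 := by
  have h := M.add_smulRV 0 0 v
  rw [add_zero] at h
  exact (add_eq_left.mp h.symm)

lemma smulVS_zero (v : V) : M.smulVS v 0 = 0 := by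
  have h := M.add_smulVS v 0 0
  rw [add_zero] at h
  exact (add_eq_left.mp h.symm)

lemma zero_smulVS (s : S) : M.smulVS 0 s = 0 := by
  have h := M.smulVS_add 0 0 s
  rw [add_zero] at h
  exact (add_eq_left.mp h.symm)

lemma smulSW_zero (s : S) : M.smulSW s 0 = 0 := by
  have h := M.smulSW_add s 0 0
  rw [add_zero] at h
  exact (add_eq_left.mp h.symm)

lemma zero_smulSW (w : W) : M.smulSW 0 w = 0 := by
  have h := M.add_smulSW 0 0 w
  rw [add_zero] at h
  exact (add_eq_left.mp h.symm)

lemma smulWR_zero (w : W) : M.smulWR w 0 = 0 := by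
  have h := M.add_smulWR w 0 0
  rw [add_zero] at h
  exact (add_eq_left.mp h.symm)

lemma zero_smulWR (r : R) : M.smulWR 0 r = 0 := by
  have h := M.smulWR_add 0 0 r
  rw [add_zero] at h
  exact (add_eq_left.mp h.symm)

lemma mulVW_zero (v : V) : M.mulVW v 0 = 0 := by
  have h := M.mulVW_add_right v 0 0
  rw [add_zero] at h
  exact (add_eq_left.mp h.symm)

lemma zero_mulVW (w : W) : M.mulVW 0 w = 0 := by
  have h := M.mulVW_add_left 0 0 w
  rw [add_zero] at h
  exact (add_eq_left.mp h.symm)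

lemma mulWV_zero (w : W) : M.mulWV w 0 = 0 := by
  have h := M.mulWV_add_right w 0 0
  rw [add_zero] at h
  exact (add_eq_left.mp h.symm)

lemma zero_mulWV (v : V) : M.mulWV 0 v = 0 := by
  have h := M.mulWV_add_left 0 0 v
  rw [add_zero] at h
  exact (add_eq_left.mp h.symm)


lemma mat_ext {a b : M.Mat} (h1 : a.1.1 = b.1.1) (h2 : a.1.2 = b.1.2)
    (h3 : a.2.1 = b.2.1) (h4 : a.2.2 = b.2.2) : a = b :=
  Prod.ext (Prod.ext h1 h2) (Prod.ext h3 h4)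

/-- Multiplication in the Morita context ring. -/
def matMul (a b : M.Mat) : M.Mat :=
  ((a.1.1 * b.1.1 + M.mulVW a.1.2 b.2.1, M.smulRV a.1.1 b.1.2 + M.smulVS a.1.2 b.2.2),
   (M.smulWR a.2.1 b.1.1 + M.smulSW a.2.2 b.2.1, M.mulWV a.2.1 b.1.2 + a.2.2 * b.2.2))

/-- The ring structure on the Morita context matrices. -/
instance : Ring M.Mat where
  __ := (inferInstance : AddCommGroup M.Mat)
  mul := M.matMul
  one := ((1, 0), (0, 1))
  left_distrib a b c := by
    show M.matMul a (b + c) = M.matMul a b + M.matMul a c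
    refine M.mat_ext ?_ ?_ ?_ ?_ <;>
      simp only [add_fst_fst, add_fst_snd, add_snd_fst, add_snd_snd] <;>
      simp [matMul, M.smulRV_add, M.add_smulVS, M.smulSW_add, M.add_smulWR,
        M.mulVW_add_right, M.mulWV_add_right, mul_add] <;> abel
  right_distrib a b c := by
    show M.matMul (a + b) c = M.matMul a c + M.matMul b c
    refine M.mat_ext ?_ ?_ ?_ ?_ <;>
      simp only [add_fst_fst, add_fst_snd, add_snd_fst, add_snd_snd] <;>
      simp [matMul, M.add_smulRV, M.smulVS_add, M.add_smulSW, M.smulWR_add,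
        M.mulVW_add_left, M.mulWV_add_left, add_mul] <;> abel
  zero_mul a := by
    show M.matMul 0 a = 0
    simp [matMul, M.zero_smulRV, M.zero_smulVS, M.zero_smulSW, M.zero_smulWR,
      M.zero_mulVW, M.zero_mulWV]
    rfl
  mul_zero a := by
    show M.matMul a 0 = 0
    simp [matMul, M.smulRV_zero, M.smulVS_zero, M.smulSW_zero, M.smulWR_zero,
      M.mulVW_zero, M.mulWV_zero]
    rfl
  mul_assoc a b c := by
    show M.matMul (M.matMul a b) c = M.matMul a (M.matMul b c)
    refine M.mat_ext ?_ ?_ ?_ ?_ <;>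
      simp [matMul, M.smulRV_add, M.add_smulRV, M.mul_smulRV, M.smulVS_add, M.add_smulVS,
        M.mul_smulVS, M.smul_assocRVS, M.smulSW_add, M.add_smulSW, M.mul_smulSW,
        M.smulWR_add, M.add_smulWR, M.mul_smulWR, M.smul_assocSWR,
        M.mulVW_add_left, M.mulVW_add_right, M.mulWV_add_left, M.mulWV_add_right,
        M.mulVW_smulR, M.mulVW_smulS, M.mulVW_smulWR, M.mulWV_smulS, M.mulWV_smulR,
        M.mulWV_smulVS, M.assocVWV, M.assocWVW, mul_add, add_mul, mul_assoc] <;> abel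
  one_mul a := by
    show M.matMul ((1, 0), (0, 1)) a = a
    simp [matMul, M.one_smulRV, M.one_smulSW, M.zero_smulVS, M.zero_smulWR,
      M.zero_mulVW, M.zero_mulWV]
    rfl
  mul_one a := by
    show M.matMul a ((1, 0), (0, 1)) = a
    simp [matMul, M.one_smulVS, M.one_smulWR, M.smulRV_zero, M.smulSW_zero,
      M.mulVW_zero, M.mulWV_zero]
    rfl

/-- The "rectangular" subset `(I, V₁, W₁, J)` of the Morita context ring. -/
def rect (I : Set R) (V₁ : Set V) (W₁ : Set W) (J : Set S) : Set M.Mat :=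
  {t | t.1.1 ∈ I ∧ t.1.2 ∈ V₁ ∧ t.2.1 ∈ W₁ ∧ t.2.2 ∈ J}

end MoritaContext

/-- A subset of a ring is a right ideal. -/
def IsRightIdealSet {A : Type*} [Ring A] (U : Set A) : Prop :=
  (0 : A) ∈ U ∧ (∀ a ∈ U, ∀ b ∈ U, a + b ∈ U) ∧ (∀ a ∈ U, -a ∈ U) ∧
    ∀ a ∈ U, ∀ t : A, a * t ∈ U

/-- A subset of a ring is a two-sided ideal. -/
def IsIdealSet {A : Type*} [Ring A] (U : Set A) : Prop :=
  (0 : A) ∈ U ∧ (∀ a ∈ U, ∀ b ∈ U, a + b ∈ U) ∧ (∀ a ∈ U, -a ∈ U) ∧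
    (∀ a ∈ U, ∀ t : A, a * t ∈ U) ∧ ∀ a ∈ U, ∀ t : A, t * a ∈ U

/-- A proper two-sided ideal `U` is prime if `aAb ⊆ U` implies `a ∈ U` or `b ∈ U`. -/
def IsPrimeIdealSet {A : Type*} [Ring A] (U : Set A) : Prop :=
  IsIdealSet U ∧ U ≠ Set.univ ∧ ∀ a b : A, (∀ x : A, a * x * b ∈ U) → a ∈ U ∨ b ∈ U

/-- A proper two-sided ideal `U` is semiprime if `aAa ⊆ U` implies `a ∈ U`. -/
def IsSemiprimeIdealSet {A : Type*} [Ring A] (U : Set A) : Prop :=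
  IsIdealSet U ∧ U ≠ Set.univ ∧ ∀ a : A, (∀ x : A, a * x * a ∈ U) → a ∈ U

/-- A proper right ideal `U` is prime if `aAb ⊆ U` implies `a ∈ U` or `b ∈ U`. -/
def IsPrimeRightIdealSet {A : Type*} [Ring A] (U : Set A) : Prop :=
  IsRightIdealSet U ∧ U ≠ Set.univ ∧ ∀ a b : A, (∀ x : A, a * x * b ∈ U) → a ∈ U ∨ b ∈ U

/-- The prime radical of a ring: the intersection of all its prime ideals. -/
def primeRadicalSet (A : Type*) [Ring A] : Set A := ⋂₀ {U | IsPrimeIdealSet U}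

/-- A ring `A` is prime if `aAb = 0` implies `a = 0` or `b = 0`. -/
def IsPrimeRing (A : Type*) [Ring A] : Prop :=
  ∀ a b : A, (∀ x : A, a * x * b = 0) → a = 0 ∨ b = 0

/-- A ring `A` is semiprime if `aAa = 0` implies `a = 0`. -/
def IsSemiprimeRing (A : Type*) [Ring A] : Prop :=
  ∀ a : A, (∀ x : A, a * x * a = 0) → a = 0

/-- The Morita context `(A,A,A,A)` over a commutative ring with all products
given by multiplication in `A`. -/
def MoritaContext.ofComm (A : Type*) [CommRing A] : MoritaContext A A A A := by
  refine ⟨(· * ·), (· * ·), (· * ·), (· * ·), (· * ·), (· * ·), ?_, ?_, ?_, ?_, ?_, ?_, ?_, ?_, ?_, ?_, ?_, ?_, ?_, ?_, ?_, ?_, ?_, ?_, ?_, ?_, ?_, ?_, ?_, ?_, ?_, ?_, ?_, ?_, ?_, ?_⟩ <;>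
    intros <;> ring

/-- The Morita context `(A, I, J, A)` over a commutative ring `A` with ideals
`I`, `J`, all products given by multiplication in `A`. -/
def MoritaContext.ofIdeals (A : Type*) [CommRing A] (I J : Ideal A) :
    MoritaContext A A I J := by
  refine ⟨fun r v => ⟨r * v.1, I.mul_mem_left r v.2⟩,
    fun v s => ⟨v.1 * s, I.mul_mem_right s v.2⟩,
    fun s w => ⟨s * w.1, J.mul_mem_left s w.2⟩,
    fun w r => ⟨w.1 * r, J.mul_mem_right r w.2⟩,
    fun v w => v.1 * w.1, fun w v => w.1 * v.1, ?_, ?_, ?_, ?_, ?_, ?_, ?_, ?_, ?_, ?_, ?_, ?_, ?_, ?_, ?_, ?_, ?_, ?_, ?_, ?_, ?_, ?_, ?_, ?_, ?_, ?_, ?_, ?_, ?_, ?_⟩ <;>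
    intros <;> first
      | (apply Subtype.ext; push_cast; ring)
      | (push_cast; ring)

variable {R S V W : Type*} [Ring R] [Ring S] [AddCommGroup V] [AddCommGroup W]

/-!
Let `e` be an element of a ring `T` that generates `T` as a two-sided ideal and whose corner `eTe`
is semiprime. If `aTa = 0`, every `c = e x a y e` satisfies `c T c ⊆ e x (aTa) y e = 0`, so
`eTaTe = 0`; writing `1 ∈ TeT` first on the left of `a y e` and then on the right of `a` gives
`aTe = 0` and `a = 0`. In the Morita context ring the corner of `e₁₁ = diag(1, 0)` is `R`, and
`T e₁₁ T` contains `diag(0, w v)`, so `WV = S` makes `e₁₁` full; symmetrically `e₂₂` has corner `S`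
and is full when `VW = R`.
-/

section

variable {T : Type*} [Ring T] {e : T}

theorem eq_zero_of_forall_mul_mul_eq_zero_left (hfull : TwoSidedIdeal.span {e} = ⊤) {b : T}
    (h : ∀ x, e * x * b = 0) : b = 0 := by
  let I : TwoSidedIdeal T := .mk' {z | ∀ x, z * x * b = 0} (by simp)
    (fun hz hz' x => by simp [add_mul, hz x, hz' x])
    (fun hz x => by simp [neg_mul, hz x])
    (fun {t _} hz x => by simp [mul_assoc, hz x])
    (fun {z t} hz x => by simpa [mul_assoc] using hz (t * x))
  have hle : TwoSidedIdeal.span {e} ≤ I := TwoSidedIdeal.span_le.2 (by simpa [I] using h)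
  simpa [I] using hle (TwoSidedIdeal.one_mem _ hfull) 1

theorem eq_zero_of_forall_mul_mul_eq_zero_right (hfull : TwoSidedIdeal.span {e} = ⊤) {b : T}
    (h : ∀ x, b * x * e = 0) : b = 0 := by
  let I : TwoSidedIdeal T := .mk' {z | ∀ x, b * x * z = 0} (by simp)
    (fun hz hz' x => by simp [mul_add, hz x, hz' x])
    (fun hz x => by simp [mul_neg, hz x])
    (fun {t z} hz x => by simpa [mul_assoc] using hz (x * t))
    (fun {z t} hz x => by simp [← mul_assoc, hz x])
  have hle : TwoSidedIdeal.span {e} ≤ I := TwoSidedIdeal.span_le.2 (by simpa [I] using h)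
  simpa [I] using hle (TwoSidedIdeal.one_mem _ hfull) 1

theorem IsSemiprimeRing.of_span_singleton_eq_top (hfull : TwoSidedIdeal.span {e} = ⊤)
    (hcorner : ∀ x, (∀ t, e * x * e * t * (e * x * e) = 0) → e * x * e = 0) :
    IsSemiprimeRing T := by
  intro a ha
  have hsandwich : ∀ x y, e * x * a * y * e = 0 := fun x y => by
    simpa [mul_assoc] using hcorner (x * a * y) fun t => by
      simpa [mul_assoc] using congrArg (fun z => e * x * z * y * e) (ha (y * e * t * e * x))
  exact eq_zero_of_forall_mul_mul_eq_zero_right hfull fun y =>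
    eq_zero_of_forall_mul_mul_eq_zero_left hfull fun x => by simpa [mul_assoc] using hsandwich x y

end

namespace MoritaContext

variable (M : MoritaContext R S V W)

attribute [local simp] smulRV_zero zero_smulRV smulVS_zero zero_smulVS smulSW_zero zero_smulSW
  smulWR_zero zero_smulWR mulVW_zero zero_mulVW mulWV_zero zero_mulWV one_smulVS one_smulWR

@[simp] lemma mat_fst_fst (r : R) (v : V) (w : W) (s : S) : (M.mat r v w s).1.1 = r := rfl
@[simp] lemma mat_fst_snd (r : R) (v : V) (w : W) (s : S) : (M.mat r v w s).1.2 = v := rfl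
@[simp] lemma mat_snd_fst (r : R) (v : V) (w : W) (s : S) : (M.mat r v w s).2.1 = w := rfl
@[simp] lemma mat_snd_snd (r : R) (v : V) (w : W) (s : S) : (M.mat r v w s).2.2 = s := rfl

@[simp] lemma mul_fst_fst (a b : M.Mat) : (a * b).1.1 = a.1.1 * b.1.1 + M.mulVW a.1.2 b.2.1 :=
  rfl
@[simp] lemma mul_fst_snd (a b : M.Mat) :
    (a * b).1.2 = M.smulRV a.1.1 b.1.2 + M.smulVS a.1.2 b.2.2 := rfl
@[simp] lemma mul_snd_fst (a b : M.Mat) :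
    (a * b).2.1 = M.smulWR a.2.1 b.1.1 + M.smulSW a.2.2 b.2.1 := rfl
@[simp] lemma mul_snd_snd (a b : M.Mat) : (a * b).2.2 = M.mulWV a.2.1 b.1.2 + a.2.2 * b.2.2 :=
  rfl

lemma mat_zero : M.mat 0 0 0 0 = 0 := rfl

abbrev e₁₁ : M.Mat := M.mat 1 0 0 0

abbrev e₂₂ : M.Mat := M.mat 0 0 0 1

lemma mat_add (r r' : R) (v v' : V) (w w' : W) (s s' : S) :
    M.mat r v w s + M.mat r' v' w' s' = M.mat (r + r') (v + v') (w + w') (s + s') := rfl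

lemma mat_neg (r : R) (v : V) (w : W) (s : S) : -M.mat r v w s = M.mat (-r) (-v) (-w) (-s) := rfl

lemma e₁₁_add_e₂₂ : M.e₁₁ + M.e₂₂ = 1 := by
  rw [mat_add]; simp only [add_zero, zero_add]; rfl

lemma e₁₁_mul_mul_e₁₁ (a : M.Mat) : M.e₁₁ * a * M.e₁₁ = M.mat a.1.1 0 0 0 := by
  refine M.mat_ext ?_ ?_ ?_ ?_ <;> simp

lemma e₂₂_mul_mul_e₂₂ (a : M.Mat) : M.e₂₂ * a * M.e₂₂ = M.mat 0 0 0 a.2.2 := by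
  refine M.mat_ext ?_ ?_ ?_ ?_ <;> simp

lemma mat_mem_span_e₁₁
    (hWV : AddSubgroup.closure {x : S | ∃ (w : W) (v : V), x = M.mulWV w v} = ⊤) (s : S) :
    M.mat 0 0 0 s ∈ TwoSidedIdeal.span {M.e₁₁} := by
  set I := TwoSidedIdeal.span {M.e₁₁}
  induction hWV ▸ AddSubgroup.mem_top s using AddSubgroup.closure_induction with
  | mem _ hx =>
    obtain ⟨w, v, rfl⟩ := hx
    have hfactor : M.mat 0 0 0 (M.mulWV w v) = M.mat 0 0 w 0 * M.e₁₁ * M.mat 0 v 0 0 := by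
      refine M.mat_ext ?_ ?_ ?_ ?_ <;> simp
    rw [hfactor]
    exact I.mul_mem_right _ _ (I.mul_mem_left _ _ (TwoSidedIdeal.subset_span rfl))
  | zero => exact M.mat_zero ▸ I.zero_mem
  | add _ _ _ _ hs hs' => simpa [mat_add] using I.add_mem hs hs'
  | neg _ _ hs => simpa [mat_neg] using I.neg_mem hs

lemma mat_mem_span_e₂₂
    (hVW : AddSubgroup.closure {x : R | ∃ (v : V) (w : W), x = M.mulVW v w} = ⊤) (r : R) :
    M.mat r 0 0 0 ∈ TwoSidedIdeal.span {M.e₂₂} := by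
  set I := TwoSidedIdeal.span {M.e₂₂}
  induction hVW ▸ AddSubgroup.mem_top r using AddSubgroup.closure_induction with
  | mem _ hx =>
    obtain ⟨v, w, rfl⟩ := hx
    have hfactor : M.mat (M.mulVW v w) 0 0 0 = M.mat 0 v 0 0 * M.e₂₂ * M.mat 0 0 w 0 := by
      refine M.mat_ext ?_ ?_ ?_ ?_ <;> simp
    rw [hfactor]
    exact I.mul_mem_right _ _ (I.mul_mem_left _ _ (TwoSidedIdeal.subset_span rfl))
  | zero => exact M.mat_zero ▸ I.zero_mem
  | add _ _ _ _ hr hr' => simpa [mat_add] using I.add_mem hr hr'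
  | neg _ _ hr => simpa [mat_neg] using I.neg_mem hr

lemma span_e₁₁_eq_top
    (hWV : AddSubgroup.closure {x : S | ∃ (w : W) (v : V), x = M.mulWV w v} = ⊤) :
    TwoSidedIdeal.span {M.e₁₁} = ⊤ :=
  TwoSidedIdeal.eq_top _ (M.e₁₁_add_e₂₂ ▸
    add_mem (TwoSidedIdeal.subset_span rfl) (M.mat_mem_span_e₁₁ hWV 1))

lemma span_e₂₂_eq_top
    (hVW : AddSubgroup.closure {x : R | ∃ (v : V) (w : W), x = M.mulVW v w} = ⊤) :
    TwoSidedIdeal.span {M.e₂₂} = ⊤ :=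
  TwoSidedIdeal.eq_top _ (M.e₁₁_add_e₂₂ ▸
    add_mem (M.mat_mem_span_e₂₂ hVW 1) (TwoSidedIdeal.subset_span rfl))

theorem isSemiprimeRing_of_isSemiprimeRing_left
    (hWV : AddSubgroup.closure {x : S | ∃ (w : W) (v : V), x = M.mulWV w v} = ⊤)
    (hR : IsSemiprimeRing R) : IsSemiprimeRing M.Mat := by
  refine IsSemiprimeRing.of_span_singleton_eq_top (M.span_e₁₁_eq_top hWV)
    fun a ha => ?_
  simp only [e₁₁_mul_mul_e₁₁] at ha ⊢
  have hr : a.1.1 = 0 := hR _ fun p => by simpa using congrArg (·.1.1) (ha (M.mat p 0 0 0))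
  rw [hr, mat_zero]

theorem isSemiprimeRing_of_isSemiprimeRing_right
    (hVW : AddSubgroup.closure {x : R | ∃ (v : V) (w : W), x = M.mulVW v w} = ⊤)
    (hS : IsSemiprimeRing S) : IsSemiprimeRing M.Mat := by
  refine IsSemiprimeRing.of_span_singleton_eq_top (M.span_e₂₂_eq_top hVW)
    fun a ha => ?_
  simp only [e₂₂_mul_mul_e₂₂] at ha ⊢
  have hs : a.2.2 = 0 := hS _ fun q => by simpa using congrArg (·.2.2) (ha (M.mat 0 0 0 q))
  rw [hs, mat_zero]

end MoritaContext

/-- Theorem 2.14, (3) ⇒ (1): if `VW = R`, `WV = S` and `R` or `S` is a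
semiprime ring, then the Morita context ring is semiprime. -/
theorem stmt19 (M : MoritaContext R S V W)
    (hVW : AddSubgroup.closure {x : R | ∃ (v : V) (w : W), x = M.mulVW v w} = ⊤)
    (hWV : AddSubgroup.closure {x : S | ∃ (w : W) (v : V), x = M.mulWV w v} = ⊤)
    (h : IsSemiprimeRing R ∨ IsSemiprimeRing S) :
    IsSemiprimeRing M.Mat :=
  h.elim (M.isSemiprimeRing_of_isSemiprimeRing_left hWV)
    (M.isSemiprimeRing_of_isSemiprimeRing_right hVW)
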